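/- Under the stated hypotheses, suppose in addition that I + R_x is invertible for every x in an open interval J ⊆ (0,∞), and set F_x = (I + R_x)⁻¹. Then x ↦ F_x is differentiable on J with dF_x/dx = A·F_x + F_x·A − 2·F_x·A·F_x, and this expression also equals F_x·exp(−xA)·B·C·exp(−xA)·F_x. -/

import Mathlib

/-!
`R` solves `R' = -G` with `G x = exp(-xA)·BC·exp(-xA)`, and the Lyapunov equation
`A R + R A = G` follows from integrating `d/dt (-G t) = A G t + G t A` over `(x, ∞)`, the tail
vanishing by exponential decay. Differentiating `F = (1 + R)⁻¹` gives `F' = F G F`, and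
substituting the Lyapunov equation, together with `R F = F R = 1 - F`, turns `F (A R + R A) F`
into `A F + F A - 2 F A F`.
-/

open MeasureTheory

/-- The semigroup `exp(-tA)` generated by a bounded operator `A`. -/
noncomputable def expA {H : Type*} [NormedAddCommGroup H] [InnerProductSpace ℂ H]
    [CompleteSpace H] (A : H →L[ℂ] H) (t : ℝ) : H →L[ℂ] H :=
  NormedSpace.exp ((-(t : ℂ)) • A)

/-- `R_x = ∫_x^∞ exp(-tA)·BC·exp(-tA) dt` as a Bochner integral. -/
noncomputable def Rop {H : Type*} [NormedAddCommGroup H] [InnerProductSpace ℂ H]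
    [CompleteSpace H] (A : H →L[ℂ] H) (BC : H →L[ℂ] H) (x : ℝ) : H →L[ℂ] H :=
  ∫ t in Set.Ioi x, expA A t * BC * expA A t

open Set Filter Topology

theorem hasDerivAt_setIntegral_Ioi {E : Type*} [NormedAddCommGroup E] [NormedSpace ℝ E]
    [CompleteSpace E] {f : ℝ → E} {a x : ℝ} (hf : IntegrableOn f (Ioi a)) (hx : a < x)
    (hfx : ContinuousAt f x) :
    HasDerivAt (fun y => ∫ t in Ioi y, f t) (-f x) x := by
  have hax : IntervalIntegrable f volume a x :=
    (intervalIntegrable_iff_integrableOn_Ioc_of_le hx.le).2 (hf.mono_set Ioc_subset_Ioi_self)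
  have hderiv := (intervalIntegral.integral_hasDerivAt_right hax
    (AEStronglyMeasurable.stronglyMeasurableAtFilter_of_mem hf.aestronglyMeasurable
      (Ioi_mem_nhds hx)) hfx).const_sub (∫ t in Ioi a, f t)
  refine hderiv.congr_of_eventuallyEq ?_
  filter_upwards [Ioi_mem_nhds hx] with y hy
  rw [← intervalIntegral.integral_Ioi_sub_Ioi hf hy.le, sub_sub_cancel]

theorem HasDerivAt.ringInverse {𝕜 R : Type*} [NontriviallyNormedField 𝕜] [NormedRing R]
    [HasSummableGeomSeries R] [NormedAlgebra 𝕜 R] {g : 𝕜 → R} {g' : R} {x : 𝕜}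
    (hg : HasDerivAt g g' x) (hx : IsUnit (g x)) :
    HasDerivAt (fun y => Ring.inverse (g y))
      (-(Ring.inverse (g x) * g' * Ring.inverse (g x))) x := by
  obtain ⟨u, hu⟩ := hx
  have h := (hu ▸ hasFDerivAt_ringInverse (𝕜 := 𝕜) u).comp_hasDerivAt x hg
  simpa [← hu, mul_assoc, Function.comp_def] using h

theorem mul_add_mul_sub_two_mul_eq_of_inverse_one_add {R : Type*} [Ring R] {a r f : R}
    (h₁ : (1 + r) * f = 1) (h₂ : f * (1 + r) = 1) :
    a * f + f * a - 2 * (f * a * f) = f * (a * r + r * a) * f := by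
  have hrf : r * f = 1 - f := by rw [add_mul, one_mul] at h₁; rw [← h₁]; abel
  have hfr : f * r = 1 - f := by rw [mul_add, mul_one] at h₂; rw [← h₂]; abel
  calc a * f + f * a - 2 * (f * a * f) = f * a * (1 - f) + (1 - f) * a * f := by noncomm_ring
    _ = f * a * (r * f) + f * r * a * f := by rw [hrf, hfr]
    _ = f * (a * r + r * a) * f := by noncomm_ring

section Semigroup

variable {H : Type*} [NormedAddCommGroup H] [InnerProductSpace ℂ H] [CompleteSpace H]
  (A BC : H →L[ℂ] H)

theorem expA_eq_exp_smul_neg (t : ℝ) : expA A t = NormedSpace.exp (t • -A) := by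
  rw [expA, smul_neg, ← neg_smul]
  norm_num [← Complex.coe_smul]

theorem hasDerivAt_expA (t : ℝ) : HasDerivAt (expA A) (-(A * expA A t)) t := by
  have h := hasDerivAt_exp_smul_const' (𝕂 := ℝ) (-A) t
  simp only [← expA_eq_exp_smul_neg] at h
  simpa [neg_mul] using h

theorem hasDerivAt_expA' (t : ℝ) : HasDerivAt (expA A) (-(expA A t * A)) t := by
  have h := hasDerivAt_exp_smul_const (𝕂 := ℝ) (-A) t
  simp only [← expA_eq_exp_smul_neg] at h
  simpa [mul_neg] using h

theorem hasDerivAt_expA_mul_mul_expA (t : ℝ) :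
    HasDerivAt (fun s => expA A s * BC * expA A s)
      (-(A * (expA A t * BC * expA A t) + expA A t * BC * expA A t * A)) t := by
  refine (((hasDerivAt_expA A t).mul_const BC).mul (hasDerivAt_expA' A t)).congr_deriv ?_
  noncomm_ring

theorem continuous_expA_mul_mul_expA : Continuous fun t => expA A t * BC * expA A t :=
  continuous_iff_continuousAt.2 fun t => (hasDerivAt_expA_mul_mul_expA A BC t).continuousAt

variable {A} {M ε : ℝ}

theorem norm_expA_mul_mul_expA_le (hdecay : ∀ t : ℝ, 0 ≤ t → ‖expA A t‖ ≤ M * Real.exp (-ε * t))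
    {t : ℝ} (ht : 0 ≤ t) :
    ‖expA A t * BC * expA A t‖ ≤ M ^ 2 * ‖BC‖ * Real.exp (-(2 * ε) * t) := by
  have hM : 0 ≤ M * Real.exp (-ε * t) := (norm_nonneg _).trans (hdecay t ht)
  calc ‖expA A t * BC * expA A t‖ ≤ ‖expA A t‖ * ‖BC‖ * ‖expA A t‖ := norm_mul₃_le
    _ ≤ M * Real.exp (-ε * t) * ‖BC‖ * (M * Real.exp (-ε * t)) := by
      gcongr <;> exact hdecay t ht
    _ = M ^ 2 * ‖BC‖ * Real.exp (-(2 * ε) * t) := by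
      rw [show -(2 * ε) * t = -ε * t + -ε * t by ring, Real.exp_add]; ring

theorem integrableOn_expA_mul_mul_expA (hε : 0 < ε)
    (hdecay : ∀ t : ℝ, 0 ≤ t → ‖expA A t‖ ≤ M * Real.exp (-ε * t)) {x : ℝ} (hx : 0 ≤ x) :
    IntegrableOn (fun t => expA A t * BC * expA A t) (Ioi x) := by
  refine Integrable.mono'
    ((exp_neg_integrableOn_Ioi x (b := 2 * ε) (by positivity)).const_mul (M ^ 2 * ‖BC‖))
    (continuous_expA_mul_mul_expA A BC).aestronglyMeasurable ?_
  filter_upwards [ae_restrict_mem measurableSet_Ioi] with t ht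
  exact norm_expA_mul_mul_expA_le BC hdecay (hx.trans ht.le)

theorem tendsto_expA_mul_mul_expA_atTop (hε : 0 < ε)
    (hdecay : ∀ t : ℝ, 0 ≤ t → ‖expA A t‖ ≤ M * Real.exp (-ε * t)) :
    Tendsto (fun t => expA A t * BC * expA A t) atTop (𝓝 0) := by
  have hbound : Tendsto (fun t => M ^ 2 * ‖BC‖ * Real.exp (-(2 * ε) * t)) atTop (𝓝 0) := by
    simpa using (Real.tendsto_exp_atBot.comp
      (tendsto_id.const_mul_atTop_of_neg (by linarith : -(2 * ε) < 0))).const_mul (M ^ 2 * ‖BC‖)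
  refine squeeze_zero_norm' ?_ hbound
  filter_upwards [eventually_ge_atTop 0] with t ht
  exact norm_expA_mul_mul_expA_le BC hdecay ht

theorem hasDerivAt_Rop (hε : 0 < ε)
    (hdecay : ∀ t : ℝ, 0 ≤ t → ‖expA A t‖ ≤ M * Real.exp (-ε * t)) {x : ℝ} (hx : 0 < x) :
    HasDerivAt (Rop A BC) (-(expA A x * BC * expA A x)) x :=
  hasDerivAt_setIntegral_Ioi (integrableOn_expA_mul_mul_expA BC hε hdecay le_rfl) hx
    (continuous_expA_mul_mul_expA A BC).continuousAt

theorem mul_Rop_add_Rop_mul (hε : 0 < ε)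
    (hdecay : ∀ t : ℝ, 0 ≤ t → ‖expA A t‖ ≤ M * Real.exp (-ε * t)) {x : ℝ} (hx : 0 ≤ x) :
    A * Rop A BC x + Rop A BC x * A = expA A x * BC * expA A x := by
  set G := fun t => expA A t * BC * expA A t
  have hG : IntegrableOn G (Ioi x) := integrableOn_expA_mul_mul_expA BC hε hdecay hx
  have hFTC : ∫ t in Ioi x, (A * G t + G t * A) = G x := by
    simpa using integral_Ioi_of_hasDerivAt_of_tendsto' (f' := fun t => A * G t + G t * A)
      (fun t _ => (hasDerivAt_expA_mul_mul_expA A BC t).neg.congr_deriv (neg_neg _))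
      ((hG.const_mul A).add (hG.mul_const A))
      (tendsto_expA_mul_mul_expA_atTop BC hε hdecay).neg
  rw [Rop, ← integral_const_mul_of_integrable hG, ← integral_mul_const_of_integrable hG,
    ← integral_add (hG.const_mul A) (hG.mul_const A), hFTC]

end Semigroup

theorem hasDerivAt_resolvent_of_lyapunov_general
    {H H₀ : Type*} [NormedAddCommGroup H] [InnerProductSpace ℂ H] [CompleteSpace H]
    [NormedAddCommGroup H₀] [InnerProductSpace ℂ H₀] [CompleteSpace H₀]
    (A : H →L[ℂ] H) (B : H₀ →L[ℂ] H) (C : H →L[ℂ] H₀)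
    (M ε : ℝ) (hε : 0 < ε)
    (hdecay : ∀ t : ℝ, 0 ≤ t → ‖expA A t‖ ≤ M * Real.exp (-ε * t))
    (J : Set ℝ) (hJopen : IsOpen J) (hJsub : J ⊆ Set.Ioi (0 : ℝ))
    (hinv : ∀ x ∈ J, IsUnit (1 + Rop A (B ∘L C) x))
    (F : ℝ → H →L[ℂ] H)
    (hF : ∀ x ∈ J, F x = Ring.inverse (1 + Rop A (B ∘L C) x)) :
    ∀ x ∈ J,
      HasDerivAt F (A * F x + F x * A - (2 : ℂ) • (F x * A * F x)) x ∧
      A * F x + F x * A - (2 : ℂ) • (F x * A * F x)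
        = F x * (expA A x * (B ∘L C) * expA A x) * F x := by
  intro x hx
  have hx0 : 0 < x := hJsub hx
  have hsandwich : A * F x + F x * A - (2 : ℂ) • (F x * A * F x)
      = F x * (expA A x * (B ∘L C) * expA A x) * F x := by
    rw [two_smul, ← two_mul, ← mul_Rop_add_Rop_mul (B ∘L C) hε hdecay hx0.le, hF x hx]
    exact mul_add_mul_sub_two_mul_eq_of_inverse_one_add (Ring.mul_inverse_cancel _ (hinv x hx))
      (Ring.inverse_mul_cancel _ (hinv x hx))
  refine ⟨hsandwich ▸ ?_, hsandwich⟩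
  have hFeq : F =ᶠ[𝓝 x] fun y => Ring.inverse (1 + Rop A (B ∘L C) y) :=
    eventually_of_mem (hJopen.mem_nhds hx) hF
  have hderiv := ((hasDerivAt_Rop (B ∘L C) hε hdecay hx0).const_add 1).ringInverse (hinv x hx)
  simpa [hF x hx] using hderiv.congr_of_eventuallyEq hFeq

/-- If `I + R_x` is invertible for every `x` in an open interval `J ⊆ (0,∞)` and
`F_x = (I + R_x)⁻¹`, then `x ↦ F_x` is differentiable on `J` with
`dF_x/dx = A·F_x + F_x·A − 2·F_x·A·F_x`, and this expression equals
`F_x·exp(−xA)·B·C·exp(−xA)·F_x`. -/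
theorem hasDerivAt_resolvent_of_lyapunov
    {H H₀ : Type*} [NormedAddCommGroup H] [InnerProductSpace ℂ H] [CompleteSpace H]
    [NormedAddCommGroup H₀] [InnerProductSpace ℂ H₀] [CompleteSpace H₀]
    (A : H →L[ℂ] H) (B : H₀ →L[ℂ] H) (C : H →L[ℂ] H₀)
    (M ε : ℝ) (hM : 0 < M) (hε : 0 < ε)
    (hdecay : ∀ t : ℝ, 0 ≤ t → ‖expA A t‖ ≤ M * Real.exp (-ε * t))
    (J : Set ℝ) (hJopen : IsOpen J) (hJsub : J ⊆ Set.Ioi (0 : ℝ))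
    (hinv : ∀ x ∈ J, IsUnit (1 + Rop A (B ∘L C) x))
    (F : ℝ → H →L[ℂ] H)
    (hF : ∀ x ∈ J, F x = Ring.inverse (1 + Rop A (B ∘L C) x)) :
    ∀ x ∈ J,
      HasDerivAt F (A * F x + F x * A - (2 : ℂ) • (F x * A * F x)) x ∧
      A * F x + F x * A - (2 : ℂ) • (F x * A * F x)
        = F x * (expA A x * (B ∘L C) * expA A x) * F x :=
  hasDerivAt_resolvent_of_lyapunov_general A B C M ε hε hdecay J hJopen hJsub hinv F hF
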